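/- arXiv:1712.00475 — 9 statements merged into one kernel-verified Lean document; each statement's English description precedes it below -/
import Mathlib

section
/- For every real p ≥ 1 and every real n ≥ 1, the function φ̃_n : ℝ → ℝ defined by φ̃_n(x) = (min(|x|, n))^p + p·n^(p−1)·max(|x| − n, 0) is convex on ℝ. -/
open Set

private lemma g_hasDerivAt (p n : ℝ) (hp : 1 ≤ p) (hn : 1 ≤ n) (t : ℝ) :
    HasDerivAt (fun t : ℝ => (min t n) ^ p + p * n ^ (p - 1) * max (t - n) 0)
      (p * (min t n) ^ (p - 1)) t := by
  have hn0 : (0 : ℝ) < n := by linarith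
  set g : ℝ → ℝ := fun t : ℝ => (min t n) ^ p + p * n ^ (p - 1) * max (t - n) 0 with hg
  -- derivative within Iic n
  have hIic : ∀ s ∈ Iic n, g s = s ^ p := by
    intro s hs
    simp only [g, min_eq_left (mem_Iic.mp hs), max_eq_right (by simp [mem_Iic.mp hs] : s - n ≤ 0)]
    ring
  have hIci : ∀ s ∈ Ici n, g s = n ^ p + p * n ^ (p - 1) * (s - n) := by
    intro s hs
    simp only [g, min_eq_right (mem_Ici.mp hs),
      max_eq_left (by simp [mem_Ici.mp hs] : (0 : ℝ) ≤ s - n)]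
  rcases lt_trichotomy t n with h | h | h
  · -- t < n : g eventually equals fun s => s ^ p
    have heq : g =ᶠ[nhds t] fun s => s ^ p := by
      filter_upwards [Iio_mem_nhds h] with s hs using hIic s (mem_Iic.mpr (le_of_lt hs))
    have hd : HasDerivAt (fun s : ℝ => s ^ p) (p * t ^ (p - 1)) t :=
      Real.hasDerivAt_rpow_const (Or.inr hp)
    have := hd.congr_of_eventuallyEq heq
    simpa [min_eq_left h.le] using this
  · -- t = n : glue Iic and Ici
    subst h
    have hd1 : HasDerivWithinAt g (p * t ^ (p - 1)) (Iic t) t := by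
      have hd : HasDerivAt (fun s : ℝ => s ^ p) (p * t ^ (p - 1)) t :=
        Real.hasDerivAt_rpow_const (Or.inr hp)
      exact (hd.hasDerivWithinAt).congr hIic (hIic t (mem_Iic.mpr le_rfl))
    have hd2 : HasDerivWithinAt g (p * t ^ (p - 1)) (Ici t) t := by
      have hd : HasDerivAt (fun s : ℝ => t ^ p + p * t ^ (p - 1) * (s - t))
          (p * t ^ (p - 1)) t := by
        have h1 : HasDerivAt (fun s : ℝ => s - t) 1 t := (hasDerivAt_id t).sub_const t
        have h2 := (h1.const_mul (p * t ^ (p - 1))).const_add (t ^ p)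
        simpa using h2
      exact (hd.hasDerivWithinAt).congr hIci (hIci t (mem_Ici.mpr le_rfl))
    have := hd1.union hd2
    rw [Iic_union_Ici, hasDerivWithinAt_univ] at this
    simpa [min_self] using this
  · -- n < t : g eventually equals the affine function
    have heq : g =ᶠ[nhds t] fun s => n ^ p + p * n ^ (p - 1) * (s - n) := by
      filter_upwards [Ioi_mem_nhds h] with s hs using hIci s (mem_Ici.mpr (le_of_lt hs))
    have hd : HasDerivAt (fun s : ℝ => n ^ p + p * n ^ (p - 1) * (s - n))
        (p * n ^ (p - 1)) t := by
      have h1 : HasDerivAt (fun s : ℝ => s - n) 1 t := (hasDerivAt_id t).sub_const n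
      have h2 := (h1.const_mul (p * n ^ (p - 1))).const_add (n ^ p)
      simpa using h2
    have := hd.congr_of_eventuallyEq heq
    simpa [min_eq_right h.le] using this

private lemma g_convexOn (p n : ℝ) (hp : 1 ≤ p) (hn : 1 ≤ n) :
    ConvexOn ℝ (Ici 0)
      (fun t : ℝ => (min t n) ^ p + p * n ^ (p - 1) * max (t - n) 0) := by
  have hn0 : (0 : ℝ) < n := by linarith
  apply MonotoneOn.convexOn_of_deriv (convex_Ici 0)
  · -- continuity
    apply ContinuousOn.add
    · apply ContinuousOn.rpow_const (by fun_prop)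
      intro t ht
      exact Or.inr (by linarith)
    · fun_prop
  · intro t _
    exact ((g_hasDerivAt p n hp hn t).hasDerivWithinAt).differentiableWithinAt
  · intro a ha b hb hab
    rw [(g_hasDerivAt p n hp hn a).deriv, (g_hasDerivAt p n hp hn b).deriv]
    rw [interior_Ici] at ha hb
    have h0a : (0 : ℝ) ≤ min a n := le_min (le_of_lt ha) hn0.le
    apply mul_le_mul_of_nonneg_left _ (by linarith : (0:ℝ) ≤ p)
    exact Real.rpow_le_rpow h0a (min_le_min_right n hab) (by linarith)

/-- For every real `p ≥ 1` and every real `n ≥ 1`, the function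
`φ̃_n(x) = (min(|x|, n))^p + p·n^(p−1)·max(|x| − n, 0)` is convex on `ℝ`.
Powers are real powers (rpow). -/
theorem phiTilde_convexOn (p n : ℝ) (hp : 1 ≤ p) (hn : 1 ≤ n) :
    ConvexOn ℝ Set.univ
      (fun x : ℝ => (min |x| n) ^ p + p * n ^ (p - 1) * max (|x| - n) 0) := by
  have hn0 : (0 : ℝ) < n := by linarith
  set g : ℝ → ℝ := fun t : ℝ => (min t n) ^ p + p * n ^ (p - 1) * max (t - n) 0 with hgdef
  have himg : (fun x : ℝ => |x|) '' univ = Ici 0 := by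
    ext y
    simp only [image_univ, mem_range, mem_Ici]
    constructor
    · rintro ⟨x, rfl⟩; exact abs_nonneg x
    · intro hy; exact ⟨y, abs_of_nonneg hy⟩
  have hgmono : MonotoneOn g (Ici 0) := by
    intro a ha b hb hab
    have h0a : (0 : ℝ) ≤ min a n := le_min ha hn0.le
    apply add_le_add
    · exact Real.rpow_le_rpow h0a (min_le_min_right n hab) (by linarith)
    · apply mul_le_mul_of_nonneg_left (max_le_max (by linarith) le_rfl)
      have : (0:ℝ) ≤ n ^ (p-1) := Real.rpow_nonneg hn0.le _
      positivity
  have habs : ConvexOn ℝ univ (fun x : ℝ => |x|) :=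
    ⟨convex_univ, fun x _ y _ a b ha hb _ => by
      calc |a • x + b • y| ≤ |a • x| + |b • y| := abs_add_le _ _
        _ = a • |x| + b • |y| := by
            simp [abs_mul, abs_of_nonneg ha, abs_of_nonneg hb, smul_eq_mul]⟩
  have := ConvexOn.comp (g := g) (f := fun x : ℝ => |x|)
    (himg ▸ g_convexOn p n hp hn) habs (himg ▸ hgmono)
  exact this
end

section
/- For every real p > 1 and every real n ≥ 1, the function φ_n is convex on ℝ, and φ_n is differentiable at every x ∈ ℝ with derivative φ_n′(x) = ψ_n(x). -/
/-- The quadratic-growth approximation `φ_n(x)` of `|x|^{2p}` (Lemma 4.1):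
`φ_n(x) = (x²)^p` if `x² ≤ n`, and `φ_n(x) = n^p + p n^(p−1)(x² − n)` otherwise.
Powers are real powers (rpow). -/
noncomputable def phiN (p n x : ℝ) : ℝ :=
  if x ^ 2 ≤ n then (x ^ 2) ^ p else n ^ p + p * n ^ (p - 1) * (x ^ 2 - n)

/-- The derivative `ψ_n` of `φ_n` (Lemma 4.1):
`ψ_n(x) = 2p x (x²)^(p−1)` if `x² ≤ n`, and `ψ_n(x) = 2p n^(p−1) x` otherwise. -/
noncomputable def psiN (p n x : ℝ) : ℝ :=
  if x ^ 2 ≤ n then 2 * p * x * (x ^ 2) ^ (p - 1) else 2 * p * n ^ (p - 1) * x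

/-- The a.e. second derivative `χ_n` of `φ_n` (Lemma 4.1):
`χ_n(x) = 2p(2p−1)(x²)^(p−1)` if `x² ≤ n`, and `χ_n(x) = 2p n^(p−1)` otherwise. -/
noncomputable def chiN (p n x : ℝ) : ℝ :=
  if x ^ 2 ≤ n then 2 * p * (2 * p - 1) * (x ^ 2) ^ (p - 1) else 2 * p * n ^ (p - 1)

open Set Topology

/-! `φ_n(x) = φ̃_n(x²)`, where `φ̃_n(t)` is `t^p` up to `t = n` and its tangent line beyond. The two
pieces of `φ̃_n` have the same value and slope at `n`, and `t ↦ t^p` is differentiable even at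
`t = 0` because `p ≥ 1`, so `φ̃_n` is differentiable everywhere and the chain rule gives
`φ_n' = ψ_n`. On `t ≥ 0` the slope `φ̃_n'(t) = p · min(t, n)^(p-1)` is nonnegative and
nondecreasing, so `ψ_n(x) = 2x φ̃_n'(x²)` is nondecreasing on `x ≥ 0`; being odd, it is
nondecreasing everywhere, and `φ_n` is convex. -/

theorem hasDerivAt_ite_le {E : Type*} [NormedAddCommGroup E] [NormedSpace ℝ E]
    {f g f' g' : ℝ → E} {a : ℝ} (hf : ∀ t ≤ a, HasDerivAt f (f' t) t)
    (hg : ∀ t, a ≤ t → HasDerivAt g (g' t) t) (hfg : f a = g a) (hfg' : f' a = g' a) (t : ℝ) :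
    HasDerivAt (fun s => if s ≤ a then f s else g s) (if t ≤ a then f' t else g' t) t := by
  rcases lt_trichotomy t a with hlt | rfl | hgt
  · have hev : (fun s => if s ≤ a then f s else g s) =ᶠ[𝓝 t] f := by
      filter_upwards [eventually_lt_nhds hlt] with s hs
      rw [if_pos hs.le]
    rw [if_pos hlt.le]
    exact (hf t hlt.le).congr_of_eventuallyEq hev
  · have hleft : HasDerivWithinAt (fun s => if s ≤ t then f s else g s) (f' t) (Iic t) t :=
      (hf t le_rfl).hasDerivWithinAt.congr_of_mem (fun s hs => if_pos hs) self_mem_Iic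
    have hright : HasDerivWithinAt (fun s => if s ≤ t then f s else g s) (f' t) (Ici t) t := by
      refine hfg' ▸ (hg t le_rfl).hasDerivWithinAt.congr_of_mem (fun s hs => ?_) self_mem_Ici
      by_cases hst : s ≤ t
      · rw [if_pos hst, le_antisymm hst hs, hfg]
      · exact if_neg hst
    rw [if_pos le_rfl]
    simpa only [Iic_union_Ici, hasDerivWithinAt_univ] using hleft.union hright
  · have hev : (fun s => if s ≤ a then f s else g s) =ᶠ[𝓝 t] g := by
      filter_upwards [eventually_gt_nhds hgt] with s hs
      rw [if_neg hs.not_ge]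
    rw [if_neg hgt.not_ge]
    exact (hg t hgt.le).congr_of_eventuallyEq hev

noncomputable def phiTildeN (p n t : ℝ) : ℝ :=
  if t ≤ n then t ^ p else n ^ p + p * n ^ (p - 1) * (t - n)

noncomputable def phiTildeDerivN (p n t : ℝ) : ℝ :=
  if t ≤ n then p * t ^ (p - 1) else p * n ^ (p - 1)

section

variable {p n : ℝ}

theorem phiN_eq_phiTildeN_comp_sq : phiN p n = phiTildeN p n ∘ (· ^ 2) := rfl

theorem psiN_eq_mul_phiTildeDerivN (x : ℝ) :
    psiN p n x = 2 * x * phiTildeDerivN p n (x ^ 2) := by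
  unfold psiN phiTildeDerivN
  split_ifs <;> ring

theorem hasDerivAt_phiTildeN (hp : 1 ≤ p) (t : ℝ) :
    HasDerivAt (phiTildeN p n) (phiTildeDerivN p n t) t := by
  refine hasDerivAt_ite_le (fun t _ => Real.hasDerivAt_rpow_const (Or.inr hp))
    (g' := fun _ => p * n ^ (p - 1)) (fun t _ => ?_) (by ring) rfl t
  simpa using ((hasDerivAt_id t).sub_const n).const_mul (p * n ^ (p - 1)) |>.const_add (n ^ p)

theorem hasDerivAt_phiN (hp : 1 ≤ p) (x : ℝ) : HasDerivAt (phiN p n) (psiN p n x) x := by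
  rw [phiN_eq_phiTildeN_comp_sq, psiN_eq_mul_phiTildeDerivN]
  refine ((hasDerivAt_phiTildeN hp (x ^ 2)).comp x (hasDerivAt_pow 2 x)).congr_deriv ?_
  push_cast
  ring

theorem phiTildeDerivN_nonneg (hp : 1 ≤ p) (hn : 0 ≤ n) {t : ℝ} (ht : 0 ≤ t) :
    0 ≤ phiTildeDerivN p n t := by
  unfold phiTildeDerivN
  split_ifs <;> positivity

theorem monotoneOn_phiTildeDerivN (hp : 1 ≤ p) : MonotoneOn (phiTildeDerivN p n) (Ici 0) := by
  intro s (hs : 0 ≤ s) t _ hst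
  have hp' : 0 ≤ p := by linarith
  have hp1 : 0 ≤ p - 1 := by linarith
  unfold phiTildeDerivN
  split_ifs with hsn htn htn
  · gcongr
  · gcongr
  · exact absurd (hst.trans htn) hsn
  · rfl

theorem monotone_psiN (hp : 1 ≤ p) (hn : 0 ≤ n) : Monotone (psiN p n) := by
  refine monotone_of_odd_of_monotoneOn_nonneg (fun x => by simp [psiN_eq_mul_phiTildeDerivN]) ?_
  rw [show psiN p n = (fun x => 2 * x) * fun x => phiTildeDerivN p n (x ^ 2) from
    funext psiN_eq_mul_phiTildeDerivN]
  refine MonotoneOn.mul (fun x _ y _ hxy => by linarith) ?_ (fun x (hx : 0 ≤ x) => by linarith)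
    (fun x _ => phiTildeDerivN_nonneg hp hn (sq_nonneg x))
  exact (monotoneOn_phiTildeDerivN hp).comp (fun x (hx : 0 ≤ x) y _ hxy => by gcongr)
    (fun x _ => sq_nonneg x)

end

/-- For every real `p > 1` and `n ≥ 1`, `φ_n` is convex on `ℝ`,
and `φ_n` is differentiable at every `x ∈ ℝ` with derivative `ψ_n(x)`. -/
theorem phiN_convexOn_and_hasDerivAt (p n : ℝ) (hp : 1 < p) (hn : 1 ≤ n) :
    ConvexOn ℝ Set.univ (phiN p n) ∧ ∀ x : ℝ, HasDerivAt (phiN p n) (psiN p n x) x := by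
  have hderiv : ∀ x, HasDerivAt (phiN p n) (psiN p n x) x := hasDerivAt_phiN hp.le
  refine ⟨Monotone.convexOn_univ_of_deriv (fun x => (hderiv x).differentiableAt) ?_, hderiv⟩
  rw [show deriv (phiN p n) = psiN p n from funext fun x => (hderiv x).deriv]
  exact monotone_psiN hp.le (by linarith)
end

section
/- For every real p > 1, every real n ≥ 1, and every x ∈ ℝ, one has |ψ_n(x) · x| ≤ 2p · φ_n(x). -/
/-- For every real `p > 1`, `n ≥ 1`, and every `x ∈ ℝ`,
`|ψ_n(x) · x| ≤ 2p · φ_n(x)`. -/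
theorem abs_psiN_mul_le (p n : ℝ) (hp : 1 < p) (hn : 1 ≤ n) (x : ℝ) :
    |psiN p n x * x| ≤ 2 * p * phiN p n x := by
  have hp0 : (0:ℝ) < p := by linarith
  have hn0 : (0:ℝ) < n := by linarith
  have hx2 : (0:ℝ) ≤ x ^ 2 := sq_nonneg x
  unfold psiN phiN
  split_ifs with h
  · have he : 2 * p * x * (x ^ 2) ^ (p - 1) * x = 2 * p * ((x ^ 2) ^ (p-1) * x ^ 2) := by ring
    have h2 : (x ^ 2) ^ (p-1) * x ^ 2 = (x ^ 2) ^ p := by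
      rcases eq_or_lt_of_le hx2 with h0 | h0
      · rw [← h0]
        simp [Real.zero_rpow (by linarith : p ≠ 0), Real.zero_rpow (by intro hc; linarith [hc] : p - 1 ≠ 0)]
      · rw [← Real.rpow_add_one (ne_of_gt h0)]; ring_nf
    rw [he, h2, abs_of_nonneg (by positivity)]
  · push_neg at h
    have h1 : 2 * p * n ^ (p - 1) * x * x = 2 * p * (n ^ (p-1) * x ^ 2) := by ring
    rw [h1, abs_of_nonneg (by positivity)]
    have hkey : n ^ (p-1) * x ^ 2 ≤ n ^ p + p * n ^ (p - 1) * (x ^ 2 - n) := by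
      have hnp : n ^ p = n ^ (p-1) * n := by
        rw [← Real.rpow_add_one (ne_of_gt hn0)]; ring_nf
      nlinarith [mul_nonneg (mul_nonneg (by linarith : (0:ℝ) ≤ p-1) (Real.rpow_pos_of_pos hn0 (p-1)).le) (by linarith : (0:ℝ) ≤ x^2-n)]
    nlinarith
end

section
/- For every real p > 1, every real n ≥ 1, and every x ∈ ℝ, one has ψ_n(x)² ≤ 2p · φ_n(x) · χ_n(x). -/
/-- For every real `p > 1`, `n ≥ 1`, and every `x ∈ ℝ`,
`ψ_n(x)² ≤ 2p · φ_n(x) · χ_n(x)`. -/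
theorem psiN_sq_le (p n : ℝ) (hp : 1 < p) (hn : 1 ≤ n) (x : ℝ) :
    psiN p n x ^ 2 ≤ 2 * p * phiN p n x * chiN p n x := by
  have hp0 : (0:ℝ) < p := by linarith
  have hn0 : (0:ℝ) < n := by linarith
  unfold psiN phiN chiN
  by_cases h : x ^ 2 ≤ n
  · simp only [if_pos h]
    rcases eq_or_lt_of_le (sq_nonneg x) with hx0 | hx0
    · rw [← hx0, Real.zero_rpow (by linarith : p - 1 ≠ 0)]
      ring_nf
      simp
    · set y := x ^ 2 with hy
      have hyp : y ^ p = y * y ^ (p - 1) := by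
        have : y ^ p = y ^ (1 + (p - 1)) := by norm_num
        rw [this, Real.rpow_add hx0, Real.rpow_one]
      have key : (2 * p * x * y ^ (p-1)) ^ 2 = 4 * p ^ 2 * (y * (y ^ (p-1)) ^ 2) := by
        rw [hy]; ring
      rw [key, hyp]
      have h1 : 2 * p * (y * y ^ (p-1)) * (2 * p * (2 * p - 1) * y ^ (p-1))
          = (4 * p ^ 2 * (2 * p - 1)) * (y * (y ^ (p-1)) ^ 2) := by ring
      rw [h1]
      have hnn : 0 ≤ y * (y ^ (p-1)) ^ 2 :=
        mul_nonneg hx0.le (sq_nonneg _)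
      have : (4 * p ^ 2 : ℝ) ≤ 4 * p ^ 2 * (2 * p - 1) := by nlinarith
      exact mul_le_mul_of_nonneg_right this hnn
  · simp only [if_neg h]
    push_neg at h
    have hnp : n ^ p = n * n ^ (p - 1) := by
      have : n ^ p = n ^ (1 + (p - 1)) := by norm_num
      rw [this, Real.rpow_add hn0, Real.rpow_one]
    have hpos : (0:ℝ) < n ^ (p-1) := Real.rpow_pos_of_pos hn0 _
    have key : n + p * (x ^ 2 - n) - x ^ 2 = (p - 1) * (x ^ 2 - n) := by ring
    have h2 : x ^ 2 ≤ n + p * (x ^ 2 - n) := by nlinarith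
    have lhs : (2 * p * n ^ (p-1) * x) ^ 2 = 4 * p ^ 2 * (n ^ (p-1)) ^ 2 * x ^ 2 := by ring
    rw [lhs, hnp]
    have rhs : 2 * p * (n * n ^ (p-1) + p * n ^ (p-1) * (x ^ 2 - n)) * (2 * p * n ^ (p-1))
        = 4 * p ^ 2 * (n ^ (p-1)) ^ 2 * (n + p * (x ^ 2 - n)) := by ring
    rw [rhs]
    have : (0:ℝ) ≤ 4 * p ^ 2 * (n ^ (p-1)) ^ 2 := by positivity
    exact mul_le_mul_of_nonneg_left h2 this
end

section
/- For every real p > 1, every real n ≥ 1, and every x ∈ ℝ, one has |ψ_n(x)|^(2p/(2p−1)) ≤ (2p)^(2p/(2p−1)) · φ_n(x). -/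
/-- For every real `p > 1`, `n ≥ 1`, and every `x ∈ ℝ`,
`|ψ_n(x)|^(2p/(2p−1)) ≤ (2p)^(2p/(2p−1)) · φ_n(x)`. -/
theorem abs_psiN_rpow_le (p n : ℝ) (hp : 1 < p) (hn : 1 ≤ n) (x : ℝ) :
    |psiN p n x| ^ (2 * p / (2 * p - 1)) ≤ (2 * p) ^ (2 * p / (2 * p - 1)) * phiN p n x := by
  have hp1 : (0:ℝ) < 2 * p - 1 := by linarith
  have hp0 : (0:ℝ) < 2 * p := by linarith
  set q : ℝ := 2 * p / (2 * p - 1) with hqdef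
  have hq0 : 0 < q := div_pos hp0 hp1
  have hqe : (2 * p - 1) * q = 2 * p := mul_div_cancel₀ _ hp1.ne'
  have hn0 : (0:ℝ) < n := by linarith
  by_cases hx : x = 0
  · subst hx
    have h0 : (0:ℝ) ^ 2 ≤ n := by norm_num; linarith
    simp only [psiN, phiN, if_pos h0]
    rw [mul_zero, zero_mul, abs_zero, Real.zero_rpow hq0.ne']
    positivity
  have ha : (0:ℝ) < |x| := abs_pos.mpr hx
  have hx2 : (x ^ 2 : ℝ) = |x| ^ (2:ℝ) := by
    rw [show ((2:ℝ)) = ((2:ℕ):ℝ) by norm_num, Real.rpow_natCast, sq_abs]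
  by_cases h2 : x ^ 2 ≤ n
  · -- equality case
    simp only [psiN, phiN, if_pos h2]
    have e1 : (x ^ 2 : ℝ) ^ (p - 1) = |x| ^ (2 * (p - 1)) := by
      rw [hx2, ← Real.rpow_mul ha.le]
    have e3 : |x| * |x| ^ (2 * (p - 1)) = |x| ^ (2 * p - 1) := by
      rw [show (2 * p - 1) = 1 + 2 * (p - 1) by ring,
        Real.rpow_one_add' ha.le (by intro h; nlinarith)]
    have e2 : |2 * p * x * (x ^ 2) ^ (p - 1)| = 2 * p * |x| ^ (2 * p - 1) := by
      rw [abs_mul, abs_mul, e1, abs_of_pos hp0,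
        abs_of_pos (Real.rpow_pos_of_pos ha _), mul_assoc, e3]
    have L : (2 * p * |x| ^ (2 * p - 1)) ^ q = (2 * p) ^ q * (x ^ 2) ^ p := by
      rw [Real.mul_rpow hp0.le (Real.rpow_nonneg (abs_nonneg x) _),
        ← Real.rpow_mul (abs_nonneg x), hqe, hx2, ← Real.rpow_mul (abs_nonneg x)]
    rw [e2, L]
  · push_neg at h2
    simp only [psiN, phiN, if_neg (not_le.mpr h2)]
    have hnp : (0:ℝ) < n ^ (p - 1) := Real.rpow_pos_of_pos hn0 _
    have hxp : (0:ℝ) < x ^ 2 := by positivity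
    have e2 : |2 * p * n ^ (p - 1) * x| = 2 * p * (n ^ (p - 1) * |x|) := by
      rw [abs_mul, abs_mul, abs_of_pos hp0, abs_of_pos hnp, mul_assoc]
    rw [e2, Real.mul_rpow hp0.le (by positivity)]
    have hq2 : q / 2 - 1 ≤ 0 := by
      have : q ≤ 2 := by rw [hqdef, div_le_iff₀ hp1]; linarith
      linarith
    have e4 : |x| ^ q = (x ^ 2) ^ (q / 2 - 1) * x ^ 2 := by
      have h5 : (x ^ 2) ^ (q / 2 - 1) * x ^ 2
          = |x| ^ ((2:ℝ) * (q / 2 - 1)) * |x| ^ (2:ℝ) := by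
        rw [hx2, ← Real.rpow_mul (abs_nonneg x)]
      rw [h5, ← Real.rpow_add ha]
      congr 1
      ring
    have key : (n ^ (p - 1) * |x|) ^ q ≤ n ^ (p - 1) * x ^ 2 := by
      rw [Real.mul_rpow hnp.le ha.le, ← Real.rpow_mul hn0.le, e4]
      have b1 : (x ^ 2) ^ (q / 2 - 1) ≤ n ^ (q / 2 - 1) :=
        Real.rpow_le_rpow_of_nonpos hn0 h2.le hq2
      have b2 : n ^ ((p - 1) * q) * n ^ (q / 2 - 1) = n ^ (p - 1) := by
        rw [← Real.rpow_add hn0]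
        congr 1
        linear_combination hqe / 2
      calc n ^ ((p - 1) * q) * ((x ^ 2) ^ (q / 2 - 1) * x ^ 2)
          ≤ n ^ ((p - 1) * q) * (n ^ (q / 2 - 1) * x ^ 2) :=
            mul_le_mul_of_nonneg_left (mul_le_mul_of_nonneg_right b1 hxp.le)
              (Real.rpow_pos_of_pos hn0 _).le
        _ = n ^ (p - 1) * x ^ 2 := by rw [← mul_assoc, b2]
    have hphi : n ^ (p - 1) * x ^ 2 ≤ n ^ p + p * n ^ (p - 1) * (x ^ 2 - n) := by
      have hnn : n ^ p = n ^ (p - 1) * n := by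
        rw [← Real.rpow_add_one hn0.ne' (p - 1)]
        congr 1
        ring
      nlinarith [hnp, h2, mul_nonneg hnp.le (mul_nonneg (by linarith : (0:ℝ) ≤ p - 1) (by linarith : (0:ℝ) ≤ x ^ 2 - n))]
    calc (2 * p) ^ q * (n ^ (p - 1) * |x|) ^ q
        ≤ (2 * p) ^ q * (n ^ (p - 1) * x ^ 2) :=
          mul_le_mul_of_nonneg_left key (Real.rpow_nonneg hp0.le _)
      _ ≤ (2 * p) ^ q * (n ^ p + p * n ^ (p - 1) * (x ^ 2 - n)) :=
          mul_le_mul_of_nonneg_left hphi (Real.rpow_nonneg hp0.le _)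
end

section
/- For every real p > 1, every real n ≥ 1, and every x ∈ ℝ, one has χ_n(x)^(p/(p−1)) ≤ (2p(2p−1))^(p/(p−1)) · φ_n(x). -/
lemma Real.mul_rpow_sub_one_rpow_div {a b p : ℝ} (ha : 0 ≤ a) (hb : 0 ≤ b) (hp : p ≠ 1) :
    (a * b ^ (p - 1)) ^ (p / (p - 1)) = a ^ (p / (p - 1)) * b ^ p := by
  have hp' : p - 1 ≠ 0 := sub_ne_zero.mpr hp
  rw [Real.mul_rpow ha (Real.rpow_nonneg hb _), ← Real.rpow_mul hb, mul_div_cancel₀ p hp']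

/-- For every real `p > 1`, `n ≥ 1`, and every `x ∈ ℝ`,
`χ_n(x)^(p/(p−1)) ≤ (2p(2p−1))^(p/(p−1)) · φ_n(x)`. -/
theorem chiN_rpow_le (p n : ℝ) (hp : 1 < p) (hn : 1 ≤ n) (x : ℝ) :
    chiN p n x ^ (p / (p - 1)) ≤ (2 * p * (2 * p - 1)) ^ (p / (p - 1)) * phiN p n x := by
  have hc : 0 ≤ 2 * p * (2 * p - 1) := by nlinarith
  unfold chiN phiN
  split_ifs with hx
  · exact (Real.mul_rpow_sub_one_rpow_div hc (sq_nonneg x) hp.ne').le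
  · have hn0 : 0 ≤ n := by linarith
    have htail : 0 ≤ p * n ^ (p - 1) * (x ^ 2 - n) :=
      mul_nonneg (mul_nonneg (by linarith) (Real.rpow_nonneg hn0 _)) (by linarith)
    rw [Real.mul_rpow_sub_one_rpow_div (by linarith) hn0 hp.ne']
    calc (2 * p) ^ (p / (p - 1)) * n ^ p
        ≤ (2 * p * (2 * p - 1)) ^ (p / (p - 1)) * n ^ p := by
          gcongr ?_ ^ _ * _
          exact le_mul_of_one_le_right (by linarith) (by linarith)
      _ ≤ (2 * p * (2 * p - 1)) ^ (p / (p - 1)) * (n ^ p + p * n ^ (p - 1) * (x ^ 2 - n)) := by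
          gcongr
          linarith
end

section
/- For every real p > 1, every real n ≥ 1, every γ ∈ (0,1), and every x ∈ ℝ, one has χ_n(x) · |x|^(2γ) ≤ 2p(2p−1) · φ_n(x)^((p−1+γ)/p). -/
/-- For every real `p > 1`, `n ≥ 1`, `γ ∈ (0,1)`, and every `x ∈ ℝ`,
`χ_n(x) · |x|^(2γ) ≤ 2p(2p−1) · φ_n(x)^((p−1+γ)/p)`. -/
theorem chiN_mul_abs_rpow_le (p n γ : ℝ) (hp : 1 < p) (hn : 1 ≤ n)
    (hγ : γ ∈ Set.Ioo (0 : ℝ) 1) (x : ℝ) :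
    chiN p n x * |x| ^ (2 * γ) ≤ 2 * p * (2 * p - 1) * phiN p n x ^ ((p - 1 + γ) / p) := by
  obtain ⟨hγ0, hγ1⟩ := hγ
  have hp0 : 0 < p := by linarith
  have hx2 : (0:ℝ) ≤ x ^ 2 := sq_nonneg x
  have habs : |x| ^ (2 * γ) = (x ^ 2) ^ γ := by
    rw [Real.rpow_mul (abs_nonneg x) 2 γ]
    congr 1
    rw [show (2:ℝ) = ((2:ℕ):ℝ) by norm_num, Real.rpow_natCast, sq_abs]
  by_cases h : x ^ 2 ≤ n
  · rw [chiN, phiN, if_pos h, if_pos h, habs, ← Real.rpow_mul hx2]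
    have he : p * ((p - 1 + γ) / p) = (p - 1) + γ := by field_simp
    rw [he, Real.rpow_add' hx2 (by linarith)]
    ring_nf
    exact le_refl _
  · push_neg at h
    rw [chiN, phiN, if_neg (not_le.mpr h), if_neg (not_le.mpr h), habs]
    have hn0 : 0 < n := by linarith
    have hx0 : 0 < x ^ 2 := lt_trans hn0 h
    have hnp1 : (0:ℝ) < n ^ (p - 1) := Real.rpow_pos_of_pos hn0 _
    have hnpeq : n ^ p = n ^ (p - 1) * n := by
      rw [← Real.rpow_add_one hn0.ne' (p - 1)]; ring_nf
    set φ := n ^ p + p * n ^ (p - 1) * (x ^ 2 - n) with hφdef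
    have hφ1 : n ^ (p - 1) * x ^ 2 ≤ φ := by
      rw [hφdef, hnpeq]
      nlinarith [mul_nonneg (by linarith : (0:ℝ) ≤ p - 1)
        (mul_nonneg hnp1.le (by linarith : (0:ℝ) ≤ x ^ 2 - n))]
    have hφ2 : n ^ p ≤ φ := by
      rw [hφdef]; nlinarith
    have hφpos : 0 < φ := lt_of_lt_of_le (Real.rpow_pos_of_pos hn0 p) hφ2
    have key : n ^ (p - 1) * (x ^ 2) ^ γ ≤ φ ^ ((p - 1 + γ) / p) := by
      have e : (p - 1 + γ) / p = γ + (p - 1) * (1 - γ) / p := by field_simp; ring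
      rw [e, Real.rpow_add hφpos]
      have h1 : (x ^ 2) ^ γ * n ^ ((p - 1) * γ) ≤ φ ^ γ := by
        calc (x ^ 2) ^ γ * n ^ ((p - 1) * γ)
            = (n ^ (p - 1) * x ^ 2) ^ γ := by
              rw [Real.mul_rpow hnp1.le hx0.le, ← Real.rpow_mul hn0.le]; ring
          _ ≤ φ ^ γ := Real.rpow_le_rpow (by positivity) hφ1 hγ0.le
      have h2 : n ^ ((p - 1) * (1 - γ)) ≤ φ ^ ((p - 1) * (1 - γ) / p) := by
        calc n ^ ((p - 1) * (1 - γ))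
            = (n ^ p) ^ ((p - 1) * (1 - γ) / p) := by
              rw [← Real.rpow_mul hn0.le]; congr 1; field_simp
          _ ≤ _ := Real.rpow_le_rpow (by positivity) hφ2
              (div_nonneg (mul_nonneg (by linarith) (by linarith)) hp0.le)
      have hsplit : n ^ (p - 1) * (x ^ 2) ^ γ
          = ((x ^ 2) ^ γ * n ^ ((p - 1) * γ)) * n ^ ((p - 1) * (1 - γ)) := by
        have : n ^ ((p - 1) * γ) * n ^ ((p - 1) * (1 - γ)) = n ^ (p - 1) := by
          rw [← Real.rpow_add hn0]; congr 1; ring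
        rw [mul_assoc, this]; ring
      rw [hsplit]
      exact mul_le_mul h1 h2 (by positivity) (by positivity)
    have hθ : (0:ℝ) ≤ φ ^ ((p - 1 + γ) / p) := (Real.rpow_pos_of_pos hφpos _).le
    calc 2 * p * n ^ (p - 1) * (x ^ 2) ^ γ
        = 2 * p * (n ^ (p - 1) * (x ^ 2) ^ γ) := by ring
      _ ≤ 2 * p * (φ ^ ((p - 1 + γ) / p)) :=
          mul_le_mul_of_nonneg_left key (by linarith)
      _ ≤ 2 * p * (2 * p - 1) * φ ^ ((p - 1 + γ) / p) := by
          nlinarith [mul_nonneg hp0.le hθ]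
end

section
/- For every real p > 1, every real n ≥ 1, and every x ∈ ℝ, one has φ_n(x) ≤ |x|^(2p), |ψ_n(x)| ≤ 2p·|x|^(2p−1), and χ_n(x) ≤ 2p(2p−1)·|x|^(2p−2). -/
/-!
On `x² ≤ n` the three functions are exactly `|x|^(2p)` and its first two derivatives. On `x² > n`,
`φ_n(x)` is the tangent line at `n` of the convex function `y ↦ y^p`, evaluated at `y = x²`, so it lies
below `(x²)^p`; and `ψ_n`, `χ_n` only replace `(x²)^(p-1)` by the smaller `n^(p-1)` (and `2p - 1 ≥ 1`).
-/

namespace Real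

lemma abs_rpow_two_mul (x p : ℝ) : |x| ^ (2 * p) = (x ^ 2) ^ p := by
  rw [← sq_abs x, ← rpow_natCast_mul (abs_nonneg x)]
  norm_num

lemma abs_rpow_two_mul_sub_one {p : ℝ} (hp : 2 * p - 1 ≠ 0) (x : ℝ) :
    |x| ^ (2 * p - 1) = |x| * (x ^ 2) ^ (p - 1) := by
  rw [← abs_rpow_two_mul, ← rpow_one_add' (abs_nonneg x) (by convert hp using 1; ring)]
  ring_nf

-- Bernoulli's inequality applied to `y / n`.
lemma rpow_add_mul_rpow_sub_one_mul_sub_le {p n y : ℝ} (hp : 1 ≤ p) (hn : 0 < n)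
    (hy : 0 ≤ y) : n ^ p + p * n ^ (p - 1) * (y - n) ≤ y ^ p := by
  have bernoulli : 1 + p * (y / n - 1) ≤ (y / n) ^ p := by
    simpa using one_add_mul_self_le_rpow_one_add (s := y / n - 1) (by
      have := div_nonneg hy hn.le; linarith) hp
  calc n ^ p + p * n ^ (p - 1) * (y - n) = (1 + p * (y / n - 1)) * n ^ p := by
        rw [rpow_sub_one hn.ne']; field_simp
    _ ≤ (y / n) ^ p * n ^ p := by gcongr
    _ = y ^ p := by rw [div_rpow hy hn.le, div_mul_cancel₀ _ (rpow_pos_of_pos hn p).ne']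

end Real

open Real

section Bounds

variable {p n : ℝ}

lemma phiN_le_abs_rpow (hp : 1 ≤ p) (hn : 0 < n) (x : ℝ) : phiN p n x ≤ |x| ^ (2 * p) := by
  rw [abs_rpow_two_mul, phiN]
  split_ifs
  · rfl
  · exact rpow_add_mul_rpow_sub_one_mul_sub_le hp hn (sq_nonneg x)

lemma abs_psiN_le (hp : 1 ≤ p) (hn : 0 < n) (x : ℝ) :
    |psiN p n x| ≤ 2 * p * |x| ^ (2 * p - 1) := by
  rw [abs_rpow_two_mul_sub_one (by linarith), psiN]
  split_ifs with hx
  · rw [abs_mul, abs_mul, abs_of_nonneg (rpow_nonneg (sq_nonneg x) _),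
      abs_of_nonneg (by positivity : (0 : ℝ) ≤ 2 * p)]
    exact (mul_assoc _ _ _).le
  · have hpow : n ^ (p - 1) ≤ (x ^ 2) ^ (p - 1) := by
      gcongr; linarith
    rw [abs_mul, abs_of_nonneg (by positivity : (0 : ℝ) ≤ 2 * p * n ^ (p - 1))]
    calc 2 * p * n ^ (p - 1) * |x| ≤ 2 * p * (x ^ 2) ^ (p - 1) * |x| := by gcongr
      _ = 2 * p * (|x| * (x ^ 2) ^ (p - 1)) := by ring

lemma chiN_le (hp : 1 ≤ p) (hn : 0 < n) (x : ℝ) :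
    chiN p n x ≤ 2 * p * (2 * p - 1) * |x| ^ (2 * p - 2) := by
  rw [show 2 * p - 2 = 2 * (p - 1) by ring, abs_rpow_two_mul, chiN]
  split_ifs with hx
  · rfl
  · calc 2 * p * n ^ (p - 1) = 2 * p * 1 * n ^ (p - 1) := by ring
      _ ≤ 2 * p * (2 * p - 1) * (x ^ 2) ^ (p - 1) := by
          gcongr <;> nlinarith

end Bounds

/-- For every real `p > 1`, `n ≥ 1`, and every `x ∈ ℝ`,
`φ_n(x) ≤ |x|^(2p)`, `|ψ_n(x)| ≤ 2p·|x|^(2p−1)`, and `χ_n(x) ≤ 2p(2p−1)·|x|^(2p−2)`. -/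
theorem phiN_psiN_chiN_dominated (p n : ℝ) (hp : 1 < p) (hn : 1 ≤ n) (x : ℝ) :
    phiN p n x ≤ |x| ^ (2 * p) ∧ |psiN p n x| ≤ 2 * p * |x| ^ (2 * p - 1) ∧
      chiN p n x ≤ 2 * p * (2 * p - 1) * |x| ^ (2 * p - 2) := by
  have hn₀ : 0 < n := by linarith
  exact ⟨phiN_le_abs_rpow hp.le hn₀ x, abs_psiN_le hp.le hn₀ x, chiN_le hp.le hn₀ x⟩
end

section
/- Let d ≥ 1 and let q : ℝ^d × ℝ^d → ℝ be symmetric (q(x, x′) = q(x′, x)), with q(x, x) ≥ 0 for all x, satisfying the Cauchy–Schwarz bound q(x, x′)² ≤ q(x, x)·q(x′, x′) for all x, x′, and satisfying: for all x, x′ ∈ ℝ^d and all y, y′ ∈ ℝ, |y²·q(x,x) − y·y′·q(x,x′) − y′·y·q(x′,x) + y′²·q(x′,x′)| ≤ ‖x − x′‖² + (y − y′)². Then there exists a constant c ∈ [0, 1] such that q(x, x′) = c for all x, x′ ∈ ℝ^d. -/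
/-- Let `q : ℝ^d × ℝ^d → ℝ` be symmetric with nonnegative diagonal,
satisfying the Cauchy–Schwarz bound `q(x,x')² ≤ q(x,x)·q(x',x')` and the
Matoussi–Scheutzow characteristic bound. Then `q` is a constant `c ∈ [0,1]`. -/
theorem q_eq_const (d : ℕ) (hd : 1 ≤ d)
    (q : EuclideanSpace ℝ (Fin d) → EuclideanSpace ℝ (Fin d) → ℝ)
    (hsymm : ∀ x x', q x x' = q x' x)
    (hdiag : ∀ x, 0 ≤ q x x)
    (hCS : ∀ x x', q x x' ^ 2 ≤ q x x * q x' x')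
    (h : ∀ x x' (y y' : ℝ),
      |y ^ 2 * q x x - y * y' * q x x' - y' * y * q x' x + y' ^ 2 * q x' x'| ≤
        ‖x - x'‖ ^ 2 + (y - y') ^ 2) :
    ∃ c : ℝ, c ∈ Set.Icc (0 : ℝ) 1 ∧ ∀ x x', q x x' = c := by
  -- Step 1: q x x - 2 q x x' + q x' x' = 0 for all x, x'
  have key : ∀ x x', q x x - 2 * q x x' + q x' x' = 0 := by
    intro x x'
    by_contra ht
    set t := q x x - 2 * q x x' + q x' x' with htdef
    have habs : 0 < |t| := abs_pos.mpr ht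
    set C := ‖x - x'‖ ^ 2 with hC
    have hCnn : 0 ≤ C := sq_nonneg _
    set y := Real.sqrt ((C + 1) / |t|) with hy
    have hy2 : y ^ 2 = (C + 1) / |t| := by
      rw [hy, Real.sq_sqrt]
      positivity
    have := h x x' y y
    have hsy : q x' x = q x x' := (hsymm x' x)
    have heq : y ^ 2 * q x x - y * y * q x x' - y * y * q x' x + y ^ 2 * q x' x'
        = y ^ 2 * t := by rw [hsy, htdef]; ring
    rw [heq, sub_self, abs_mul, abs_of_nonneg (sq_nonneg y), hy2] at this
    have h1 : (C + 1) / |t| * |t| = C + 1 := div_mul_cancel₀ _ (ne_of_gt habs)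
    rw [h1] at this
    simp only [ne_eq, OfNat.ofNat_ne_zero, not_false_eq_true, zero_pow, add_zero] at this
    linarith
  -- Step 2: diagonal is constant and equals off-diagonal
  have hoff : ∀ x x', q x x' = q x x := by
    intro x x'
    have hk := key x x'
    have hcs := hCS x x'
    -- a + b = 2m, m² ≤ ab ⇒ (a-b)² ≤ 0 ⇒ a = b, m = a
    have hm : q x x' = (q x x + q x' x') / 2 := by linarith
    rw [hm] at hcs
    have hab : q x x = q x' x' := by nlinarith [sq_nonneg (q x x - q x' x')]
    linarith
  refine ⟨q 0 0, ⟨hdiag 0, ?_⟩, fun x x' => ?_⟩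
  · have := h 0 0 1 0
    simp only [sub_self, norm_zero] at this
    have : |q 0 0| ≤ 1 := by
      calc |q 0 0| = |1 ^ 2 * q 0 0 - 1 * 0 * q 0 0 - 0 * 1 * q 0 0 + 0 ^ 2 * q 0 0| := by
            ring_nf
        _ ≤ ‖(0 : EuclideanSpace ℝ (Fin d)) - 0‖ ^ 2 + (1 - 0) ^ 2 := h 0 0 1 0
        _ = 1 := by simp
    exact (abs_le.mp this).2
  · calc q x x' = q x x := hoff x x'
      _ = q x 0 := (hoff x 0).symm
      _ = q 0 x := hsymm x 0
      _ = q 0 0 := hoff 0 x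
end
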